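/- Let a, b ∈ ℂ be nonzero and let λ ∈ ℂ* be a complex number which is not a root of unity. In ℙ²(ℂ) with homogeneous coordinates (x : y : z), let L₁ = {x − y = 0}, L₂ = {ax + by − z = 0}, L₃ = {bx + ay − z = 0}, and let β be the automorphism of ℙ²(ℂ) induced by the diagonal matrix diag(λ, λ⁻¹, 1). For every integer m, the point P_m = (1 : 1 : aλ^m + bλ^{−m}) satisfies: P_m ∈ L₁, β^m(P_m) ∈ L₂, and β^{−m}(P_m) ∈ L₃. Consequently, the set of points of L₁ whose β-orbit intersects both L₂ and L₃ is infinite. -/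

import Mathlib

/-! Since `β ^ m` acts by `diag(λ ^ m, λ ^ (-m), 1)`, the verification of the three incidences is
direct. For infinitude, `P_m = P_k` forces `a λ^m + b λ^(-m) = a λ^k + b λ^(-k)`, which factors
as `(λ^k - λ^m)(a - b λ^(-m-k)) = 0`; as `m ↦ λ^m` is injective, each fibre of `m ↦ P_m` has at
most two elements, so its image is infinite. -/

noncomputable section

open Projectivization

/-- The projective plane `ℙ²(ℂ)`. -/
abbrev ProjPlane := Projectivization ℂ (Fin 3 → ℂ)

/-- The automorphism of `ℙ²(ℂ)` induced by a linear automorphism `g` of `ℂ³`. -/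
def projAct (g : (Fin 3 → ℂ) ≃ₗ[ℂ] (Fin 3 → ℂ)) (x : ProjPlane) : ProjPlane :=
  Projectivization.map g.toLinearMap g.injective x

/-- The point lies on the line cut out by the linear form `f`. -/
def OnLine (P : ProjPlane) (f : (Fin 3 → ℂ) →ₗ[ℂ] ℂ) : Prop :=
  P.submodule ≤ LinearMap.ker f

/-- coordinate functionals -/
def coord (i : Fin 3) : (Fin 3 → ℂ) →ₗ[ℂ] ℂ := LinearMap.proj i

/-- The line `L₁ : x − y = 0`. -/
def lineOne : (Fin 3 → ℂ) →ₗ[ℂ] ℂ := coord 0 - coord 1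

/-- The line `L₂ : ax + by − z = 0`. -/
def lineTwo (a b : ℂ) : (Fin 3 → ℂ) →ₗ[ℂ] ℂ := a • coord 0 + b • coord 1 - coord 2

/-- The line `L₃ : bx + ay − z = 0`. -/
def lineThree (a b : ℂ) : (Fin 3 → ℂ) →ₗ[ℂ] ℂ := b • coord 0 + a • coord 1 - coord 2

/-- The point `P_m = (1 : 1 : aλ^m + bλ^{−m})`. -/
def pt (a b lam : ℂ) (m : ℤ) : ProjPlane :=
  Projectivization.mk ℂ ![1, 1, a * lam ^ m + b * lam ^ (-m)] (by
    intro h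
    have h0 := congrFun h 0
    simp at h0)

lemma zpow_injective_of_pow_ne_one {G₀ : Type*} [GroupWithZero G₀] {x : G₀} (hx : x ≠ 0)
    (hroot : ∀ n : ℕ, 0 < n → x ^ n ≠ 1) : Function.Injective (fun m : ℤ => x ^ m) := by
  have hunit : Function.Injective (fun m : ℤ => Units.mk0 x hx ^ m) :=
    injective_zpow_iff_not_isOfFinOrder.mpr fun hfin => by
      obtain ⟨n, hn, hpow⟩ := isOfFinOrder_iff_pow_eq_one.mp hfin
      exact hroot n hn (by simpa using congrArg Units.val hpow)
  intro m k hmk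
  exact hunit (Units.val_injective (by simpa [Units.val_zpow_eq_zpow_val] using hmk))

section Laurent

variable {K : Type*} [Field K] {a b x : K}

lemma zpow_eq_or_mul_zpow_add_eq (hx : x ≠ 0) {m k : ℤ}
    (h : a * x ^ k + b * x ^ (-k) = a * x ^ m + b * x ^ (-m)) :
    x ^ k = x ^ m ∨ a * x ^ (m + k) = b := by
  have hk : x ^ k ≠ 0 := zpow_ne_zero k hx
  have hm : x ^ m ≠ 0 := zpow_ne_zero m hx
  rw [zpow_neg, zpow_neg] at h
  field_simp at h
  have key : (x ^ k - x ^ m) * (a * (x ^ m * x ^ k) - b) = 0 := by linear_combination h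
  rw [zpow_add₀ hx]
  rcases mul_eq_zero.mp key with h | h
  · exact Or.inl (sub_eq_zero.mp h)
  · exact Or.inr (sub_eq_zero.mp h)

lemma infinite_range_mul_zpow_add_mul_zpow_neg (ha : a ≠ 0) (hx : x ≠ 0)
    (hroot : ∀ n : ℕ, 0 < n → x ^ n ≠ 1) :
    (Set.range fun m : ℤ => a * x ^ m + b * x ^ (-m)).Infinite := by
  have hinj := zpow_injective_of_pow_ne_one hx hroot
  intro hfin
  refine Set.infinite_univ (α := ℤ) ?_
  rw [← Set.preimage_range]
  refine hfin.preimage' ?_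
  rintro _ ⟨m, rfl⟩
  have hsub : (fun k : ℤ => a * x ^ k + b * x ^ (-k)) ⁻¹' {a * x ^ m + b * x ^ (-m)} ⊆
      {m} ∪ {k | a * x ^ (m + k) = b} := fun k hk =>
    (zpow_eq_or_mul_zpow_add_eq hx hk).imp (hinj ·) id
  refine ((Set.finite_singleton m).union ?_).subset hsub
  refine Set.Subsingleton.finite fun k hk k' hk' => ?_
  have := hinj (mul_left_cancel₀ ha ((hk : a * x ^ (m + k) = b).trans hk'.symm))
  simpa using this

end Laurent

lemma LinearEquiv.zpow_apply_of_eq_diagonal {K n : Type*} [Field K] [Fintype n] [DecidableEq n]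
    {d : n → K} (hd : ∀ i, d i ≠ 0) {β : (n → K) ≃ₗ[K] (n → K)}
    (hβ : β.toLinearMap = Matrix.toLin' (Matrix.diagonal d)) (m : ℤ) (v : n → K) (i : n) :
    (β ^ m) v i = d i ^ m * v i := by
  have hβv : ∀ u : n → K, β u i = d i * u i := fun u => by
    rw [← LinearEquiv.coe_coe, hβ, Matrix.toLin'_apply, Matrix.mulVec_diagonal]
  induction m using Int.induction_on generalizing v with
  | zero => simp
  | succ m ih =>
    rw [zpow_add_one, LinearEquiv.mul_apply, ih, hβv, zpow_add_one₀ (hd i)]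
    ring
  | pred m ih =>
    have hstep : β ((β ^ (-(m : ℤ) - 1)) v) = (β ^ (-(m : ℤ))) v := by
      rw [← LinearEquiv.mul_apply, ← zpow_one_add, add_sub_cancel]
    have := hβv ((β ^ (-(m : ℤ) - 1)) v)
    rw [hstep, ih] at this
    rw [zpow_sub_one₀ (hd i), mul_right_comm, this, mul_comm, inv_mul_cancel_left₀ (hd i)]

lemma onLine_mk (v : Fin 3 → ℂ) (hv : v ≠ 0) (f : (Fin 3 → ℂ) →ₗ[ℂ] ℂ) :
    OnLine (Projectivization.mk ℂ v hv) f ↔ f v = 0 := by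
  rw [OnLine, Projectivization.submodule_mk, Submodule.span_singleton_le_iff_mem,
    LinearMap.mem_ker]

def lineOnePoint (z : ℂ) : ProjPlane :=
  Projectivization.mk ℂ ![1, 1, z] (fun h => by simpa using congrFun h 0)

lemma lineOnePoint_injective : Function.Injective lineOnePoint := by
  intro z w h
  obtain ⟨c, hc⟩ := (Projectivization.mk_eq_mk_iff _ _ _ _ _).mp h
  have hc1 : (c : ℂ) = 1 := by simpa [Units.smul_def] using congrFun hc 0
  simpa [Units.smul_def, hc1] using (congrFun hc 2).symm

lemma pt_onLine_lineOne (a b lam : ℂ) (m : ℤ) : OnLine (pt a b lam m) lineOne := by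
  simp [pt, onLine_mk, lineOne, coord]

section Diagonal

variable {a b lam : ℂ} {β : (Fin 3 → ℂ) ≃ₗ[ℂ] (Fin 3 → ℂ)}

lemma zpow_apply_of_eq_diagonal (hlam : lam ≠ 0)
    (hβ : β.toLinearMap = Matrix.toLin' (Matrix.diagonal ![lam, lam⁻¹, 1]))
    (m : ℤ) (v : Fin 3 → ℂ) : (β ^ m) v = ![lam ^ m * v 0, lam ^ (-m) * v 1, v 2] := by
  have hd : ∀ i, ![lam, lam⁻¹, 1] i ≠ 0 := by
    intro i; fin_cases i <;> simp [hlam]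
  ext i
  rw [LinearEquiv.zpow_apply_of_eq_diagonal hd hβ]
  fin_cases i <;> simp [zpow_neg]

lemma projAct_zpow_pt_onLine_lineTwo (hlam : lam ≠ 0)
    (hβ : β.toLinearMap = Matrix.toLin' (Matrix.diagonal ![lam, lam⁻¹, 1])) (m : ℤ) :
    OnLine (projAct (β ^ m) (pt a b lam m)) (lineTwo a b) := by
  rw [pt, projAct, Projectivization.map_mk, onLine_mk, LinearEquiv.coe_coe,
    zpow_apply_of_eq_diagonal hlam hβ]
  simp [lineTwo, coord]

lemma projAct_zpow_neg_pt_onLine_lineThree (hlam : lam ≠ 0)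
    (hβ : β.toLinearMap = Matrix.toLin' (Matrix.diagonal ![lam, lam⁻¹, 1])) (m : ℤ) :
    OnLine (projAct (β ^ (-m)) (pt a b lam m)) (lineThree a b) := by
  rw [pt, projAct, Projectivization.map_mk, onLine_mk, LinearEquiv.coe_coe,
    zpow_apply_of_eq_diagonal hlam hβ]
  simp [lineThree, coord]
  ring

end Diagonal

lemma infinite_range_pt {a b lam : ℂ} (ha : a ≠ 0) (hlam : lam ≠ 0)
    (hroot : ∀ n : ℕ, 0 < n → lam ^ n ≠ 1) : (Set.range (pt a b lam)).Infinite := by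
  have hrange : Set.range (pt a b lam) =
      lineOnePoint '' Set.range fun m : ℤ => a * lam ^ m + b * lam ^ (-m) := by
    rw [← Set.range_comp]; rfl
  rw [hrange]
  exact (infinite_range_mul_zpow_add_mul_zpow_neg ha hlam hroot).image
    lineOnePoint_injective.injOn

theorem example_infinite_family_diagonal_general (a b lam : ℂ) (ha : a ≠ 0)
    (hlam : lam ≠ 0) (hroot : ∀ n : ℕ, 0 < n → lam ^ n ≠ 1)
    (β : (Fin 3 → ℂ) ≃ₗ[ℂ] (Fin 3 → ℂ))
    (hβ : β.toLinearMap = Matrix.toLin' (Matrix.diagonal ![lam, lam⁻¹, 1])) :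
    (∀ m : ℤ,
      OnLine (pt a b lam m) lineOne ∧
      OnLine (projAct (β ^ m) (pt a b lam m)) (lineTwo a b) ∧
      OnLine (projAct (β ^ (-m)) (pt a b lam m)) (lineThree a b)) ∧
    {P : ProjPlane | OnLine P lineOne ∧
      (∃ m : ℤ, OnLine (projAct (β ^ m) P) (lineTwo a b)) ∧
      (∃ k : ℤ, OnLine (projAct (β ^ k) P) (lineThree a b))}.Infinite := by
  have hP : ∀ m : ℤ,
      OnLine (pt a b lam m) lineOne ∧
      OnLine (projAct (β ^ m) (pt a b lam m)) (lineTwo a b) ∧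
      OnLine (projAct (β ^ (-m)) (pt a b lam m)) (lineThree a b) := fun m =>
    ⟨pt_onLine_lineOne a b lam m, projAct_zpow_pt_onLine_lineTwo hlam hβ m,
      projAct_zpow_neg_pt_onLine_lineThree hlam hβ m⟩
  refine ⟨hP, (infinite_range_pt (b := b) ha hlam hroot).mono ?_⟩
  rintro _ ⟨m, rfl⟩
  exact ⟨(hP m).1, ⟨m, (hP m).2.1⟩, ⟨-m, (hP m).2.2⟩⟩

/-- For `β` induced by `diag(λ, λ⁻¹, 1)` with `λ` not a root of unity, the point
`P_m = (1 : 1 : aλ^m + bλ^{−m})` lies on `L₁ : x = y`, `β^m(P_m)` lies on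
`L₂ : ax + by = z` and `β^{−m}(P_m)` lies on `L₃ : bx + ay = z`; consequently infinitely
many points of `L₁` have a `β`-orbit meeting both `L₂` and `L₃`. -/
theorem example_infinite_family_diagonal (a b lam : ℂ) (ha : a ≠ 0) (hb : b ≠ 0)
    (hlam : lam ≠ 0) (hroot : ∀ n : ℕ, 0 < n → lam ^ n ≠ 1)
    (β : (Fin 3 → ℂ) ≃ₗ[ℂ] (Fin 3 → ℂ))
    (hβ : β.toLinearMap = Matrix.toLin' (Matrix.diagonal ![lam, lam⁻¹, 1])) :
    (∀ m : ℤ,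
      OnLine (pt a b lam m) lineOne ∧
      OnLine (projAct (β ^ m) (pt a b lam m)) (lineTwo a b) ∧
      OnLine (projAct (β ^ (-m)) (pt a b lam m)) (lineThree a b)) ∧
    {P : ProjPlane | OnLine P lineOne ∧
      (∃ m : ℤ, OnLine (projAct (β ^ m) P) (lineTwo a b)) ∧
      (∃ k : ℤ, OnLine (projAct (β ^ k) P) (lineThree a b))}.Infinite :=
  example_infinite_family_diagonal_general a b lam ha hlam hroot β hβ
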